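/- arXiv:1502.06412 — 6 statements merged into one kernel-verified Lean document; each statement's English description precedes it below -/
import Mathlib

section
/- Let s_1 < s_2 < ... < s_10 be real numbers and suppose that their 55 Walsh averages (s_i + s_j)/2 (1 ≤ i ≤ j ≤ 10) are pairwise distinct; let w_1 < w_2 < ... < w_55 denote these Walsh averages in increasing order. Then s_2 ≤ w_9 holds if and only if 2 s_2 ≤ s_1 + s_9. -/
/-- With `s_1 < ... < s_10` (here `s 0 < ... < s 9`) having pairwise distinct
Walsh averages, enumerated increasingly by `w : Fin 55 → ℝ`: `s_2 ≤ w_9` holds if and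
only if `2 s_2 ≤ s_1 + s_9` (here: `s 1 ≤ w 8 ↔ 2 * s 1 ≤ s 0 + s 8`). -/
theorem s2_le_w9_iff (s : Fin 10 → ℝ) (hs : StrictMono s)
    (w : Fin 55 → ℝ) (hw : StrictMono w)
    (hrange : Set.range w = {v : ℝ | ∃ i j : Fin 10, i ≤ j ∧ v = (s i + s j) / 2}) :
    s 1 ≤ w 8 ↔ 2 * s 1 ≤ s 0 + s 8 := by
  constructor
  · -- forward: if s 1 ≤ w 8 then 2 s1 ≤ s0 + s8
    intro h
    by_contra hc
    push_neg at hc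
    -- every (s0+sj)/2 is in range w
    have hmem : ∀ j : Fin 10, ∃ k : Fin 55, w k = (s 0 + s j) / 2 := by
      intro j
      have : (s 0 + s j) / 2 ∈ Set.range w := by
        rw [hrange]; exact ⟨0, j, Fin.zero_le j, rfl⟩
      exact this
    choose f hf using hmem
    have hlt : ∀ j : Fin 9, (f (j.castLE (by norm_num)) : ℕ) < 8 := by
      intro j
      have hj8 : (j.castLE (by norm_num) : Fin 10) ≤ 8 := by
        simp [Fin.le_def]; omega
      have hle : s (j.castLE (by norm_num)) ≤ s 8 := hs.monotone hj8
      have h1 : w (f (j.castLE (by norm_num))) < s 1 := by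
        rw [hf]; linarith
      have h2 : w (f (j.castLE (by norm_num))) < w 8 := lt_of_lt_of_le h1 h
      exact hw.lt_iff_lt.mp h2
    set g : Fin 9 → Fin 8 := fun j => ⟨f (j.castLE (by norm_num)), hlt j⟩ with hg
    have hginj : Function.Injective g := by
      intro j1 j2 he
      have hfe : f (j1.castLE (by norm_num)) = f (j2.castLE (by norm_num)) := by
        simpa [hg, Fin.ext_iff] using he
      have : (s 0 + s (j1.castLE (by norm_num))) / 2
           = (s 0 + s (j2.castLE (by norm_num))) / 2 := by
        rw [← hf, ← hf, hfe]
      have hss : s (j1.castLE (by norm_num)) = s (j2.castLE (by norm_num)) := by linarith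
      have := hs.injective hss
      exact Fin.ext (by simpa [Fin.ext_iff] using this)
    have := Fintype.card_le_of_injective g hginj
    simp at this
  · -- backward
    intro h
    by_contra hc
    push_neg at hc
    have hmem : ∀ i : Fin 9, ∃ a b : Fin 10, a ≤ b ∧
        w (i.castLE (by norm_num)) = (s a + s b) / 2 := by
      intro i
      have : w (i.castLE (by norm_num)) ∈ Set.range w := ⟨_, rfl⟩
      rw [hrange] at this
      exact this
    choose a b hab hw2 using hmem
    have hwlt : ∀ i : Fin 9, w (i.castLE (by norm_num)) < s 1 := by
      intro i
      refine lt_of_le_of_lt ?_ hc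
      exact hw.monotone (by simp [Fin.le_def]; omega)
    have ha0 : ∀ i, a i = 0 := by
      intro i
      by_contra hne
      have h1 : (1 : Fin 10) ≤ a i := by
        have := Fin.pos_of_ne_zero hne
        exact Fin.le_def.mpr (Fin.lt_def.mp this)
      have h2 : s 1 ≤ s (a i) := hs.monotone h1
      have h3 : s (a i) ≤ s (b i) := hs.monotone (hab i)
      have := hwlt i
      rw [hw2 i] at this
      linarith
    have hb8 : ∀ i, (b i : ℕ) < 8 := by
      intro i
      have h0 := hwlt i
      rw [hw2 i, ha0 i] at h0
      have hb : s (b i) < s 8 := by linarith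
      exact hs.lt_iff_lt.mp hb
    set g : Fin 9 → Fin 8 := fun i => ⟨b i, hb8 i⟩ with hg
    have hginj : Function.Injective g := by
      intro i1 i2 he
      have hb' : b i1 = b i2 := by
        exact Fin.ext (by simpa [hg, Fin.ext_iff] using he)
      have hww : w (i1.castLE (by norm_num)) = w (i2.castLE (by norm_num)) := by
        rw [hw2 i1, hw2 i2, ha0 i1, ha0 i2, hb']
      have := hw.injective hww
      exact Fin.ext (by simpa [Fin.ext_iff] using this)
    have := Fintype.card_le_of_injective g hginj
    simp at this
end

section
/- Let s_1 < s_2 < ... < s_10 be real numbers and suppose that their 55 Walsh averages (s_i + s_j)/2 (1 ≤ i ≤ j ≤ 10) are pairwise distinct; let w_1 < w_2 < ... < w_55 denote these Walsh averages in increasing order. Then w_47 ≤ s_9 holds if and only if s_2 + s_10 ≤ 2 s_9. -/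
/-- With `s_1 < ... < s_10` (here `s 0 < ... < s 9`) having pairwise distinct
Walsh averages, enumerated increasingly by `w : Fin 55 → ℝ`: `w_47 ≤ s_9` holds if and
only if `s_2 + s_10 ≤ 2 s_9` (here: `w 46 ≤ s 8 ↔ s 1 + s 9 ≤ 2 * s 8`). -/
theorem w47_le_s9_iff (s : Fin 10 → ℝ) (hs : StrictMono s)
    (w : Fin 55 → ℝ) (hw : StrictMono w)
    (hrange : Set.range w = {v : ℝ | ∃ i j : Fin 10, i ≤ j ∧ v = (s i + s j) / 2}) :
    w 46 ≤ s 8 ↔ s 1 + s 9 ≤ 2 * s 8 := by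
  have hrange' : ∀ k : Fin 55, ∃ i j : Fin 10, i ≤ j ∧ w k = (s i + s j) / 2 := by
    intro k
    have : w k ∈ Set.range w := ⟨k, rfl⟩
    rw [hrange] at this
    exact this
  constructor
  · -- w 46 ≤ s 8 → s 1 + s 9 ≤ 2 * s 8
    intro h46
    by_contra hlt
    push_neg at hlt  -- 2 * s 8 < s 1 + s 9
    have hmem : ∀ i : Fin 10, ∃ k : Fin 55, w k = (s i + s 9) / 2 := by
      intro i
      have : (s i + s 9) / 2 ∈ Set.range w := by
        rw [hrange]
        exact ⟨i, 9, by omega, rfl⟩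
      obtain ⟨k, hk⟩ := this
      exact ⟨k, hk⟩
    choose g hg using hmem
    have hmaps : ∀ i ∈ Finset.Icc (1 : Fin 10) 9, g i ∈ Finset.Icc (47 : Fin 55) 54 := by
      intro i hi
      simp only [Finset.mem_Icc] at hi ⊢
      have h1i : s 1 ≤ s i := hs.monotone hi.1
      have hwg : s 8 < w (g i) := by
        rw [hg i]; nlinarith
      have : w 46 < w (g i) := lt_of_le_of_lt h46 hwg
      have h46lt : (46 : Fin 55) < g i := hw.lt_iff_lt.mp this
      constructor
      · omega
      · omega
    have hinj : Set.InjOn g (Finset.Icc (1 : Fin 10) 9) := by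
      intro i _ j _ hij
      have : (s i + s 9) / 2 = (s j + s 9) / 2 := by
        rw [← hg i, ← hg j, hij]
      have : s i = s j := by linarith
      exact hs.injective this
    have hcard := Finset.card_le_card_of_injOn g hmaps hinj
    have c1 : (Finset.Icc (1 : Fin 10) 9).card = 9 := by decide
    have c2 : (Finset.Icc (47 : Fin 55) 54).card = 8 := by decide
    rw [c1, c2] at hcard
    omega
  · -- s 1 + s 9 ≤ 2 * s 8 → w 46 ≤ s 8
    intro hineq
    by_contra h46
    push_neg at h46  -- s 8 < w 46
    have hmem : ∀ k : Fin 55, ∃ i : Fin 10,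
        k ∈ Finset.Icc (46 : Fin 55) 54 → (2 ≤ i ∧ w k = (s i + s 9) / 2) := by
      intro k
      by_cases hk : k ∈ Finset.Icc (46 : Fin 55) 54
      · simp only [Finset.mem_Icc] at hk
        have hwk : s 8 < w k := by
          rcases eq_or_lt_of_le hk.1 with h | h
          · rw [← h]; exact h46
          · exact lt_trans h46 (hw h)
        obtain ⟨i, j, hij, hkval⟩ := hrange' k
        have hsij : s i ≤ s j := hs.monotone hij
        have hj8 : s 8 < s j := by rw [hkval] at hwk; linarith
        have hj : j = 9 := by
          have := hs.lt_iff_lt.mp hj8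
          omega
        subst hj
        refine ⟨i, fun _ => ⟨?_, hkval⟩⟩
        have hsi : s 1 < s i := by rw [hkval] at hwk; linarith
        have := hs.lt_iff_lt.mp hsi
        omega
      · exact ⟨0, fun h => absurd h hk⟩
    choose f hf using hmem
    have hmaps : ∀ k ∈ Finset.Icc (46 : Fin 55) 54, f k ∈ Finset.Icc (2 : Fin 10) 9 := by
      intro k hk
      obtain ⟨h2, _⟩ := hf k hk
      simp only [Finset.mem_Icc]
      exact ⟨h2, by omega⟩
    have hinj : Set.InjOn f (Finset.Icc (46 : Fin 55) 54) := by
      intro k hk k' hk' hkk'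
      have e1 := (hf k hk).2
      have e2 := (hf k' hk').2
      rw [hkk'] at e1
      exact hw.injective (e1.trans e2.symm)
    have hcard := Finset.card_le_card_of_injOn f hmaps hinj
    have c1 : (Finset.Icc (46 : Fin 55) 54).card = 9 := by decide
    have c2 : (Finset.Icc (2 : Fin 10) 9).card = 8 := by decide
    rw [c1, c2] at hcard
    omega
end

section
/- Let s_1 < s_2 < ... < s_10 be real numbers and suppose that their 55 Walsh averages (s_i + s_j)/2 (1 ≤ i ≤ j ≤ 10) are pairwise distinct; let w_1 < w_2 < ... < w_55 denote these Walsh averages in increasing order. If w_9 < s_2, then for every k with 1 ≤ k ≤ 9 one has w_k = (s_1 + s_k)/2; that is, the nine smallest Walsh averages are exactly (s_1 + s_1)/2 < (s_1 + s_2)/2 < ... < (s_1 + s_9)/2. -/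
/-- With `s_1 < ... < s_10` (here `s 0 < ... < s 9`) having pairwise distinct
Walsh averages, enumerated increasingly by `w : Fin 55 → ℝ`: if `w_9 < s_2`
(here `w 8 < s 1`), then for every `k ≤ 9` one has `w_k = (s_1 + s_k)/2`
(here: for every `k : Fin 55` with `k ≤ 8`, `w k = (s 0 + s k)/2`). -/
theorem nine_smallest_walsh (s : Fin 10 → ℝ) (hs : StrictMono s)
    (w : Fin 55 → ℝ) (hw : StrictMono w)
    (hrange : Set.range w = {v : ℝ | ∃ i j : Fin 10, i ≤ j ∧ v = (s i + s j) / 2})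
    (h : w 8 < s 1) :
    ∀ k : Fin 55, ∀ hk : (k : ℕ) ≤ 8, w k = (s 0 + s ⟨(k : ℕ), by omega⟩) / 2 := by
  have key : ∀ n : ℕ, ∀ hn : n ≤ 8,
      w ⟨n, by omega⟩ = (s 0 + s ⟨n, by omega⟩) / 2 := by
    intro n
    induction n using Nat.strong_induction_on with
    | _ n ih =>
      intro hn
      have hmem : w ⟨n, by omega⟩ ∈ Set.range w := Set.mem_range_self _
      rw [hrange] at hmem
      obtain ⟨i, j, hij, hval⟩ := hmem
      have hi0 : i = 0 := by
        by_contra hi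
        have h1 : (1 : Fin 10) ≤ i := by
          rw [Fin.le_def]
          have := Fin.pos_of_ne_zero hi
          rw [Fin.lt_def] at this
          simp only [Fin.val_zero, Fin.val_one] at this ⊢; omega
        have hsi : s 1 ≤ s i := hs.monotone h1
        have hsj : s 1 ≤ s j := hs.monotone (le_trans h1 hij)
        have hle : w ⟨n, by omega⟩ ≤ w 8 := by
          apply hw.monotone
          rw [Fin.le_def]
          simpa using hn
        rw [hval] at hle
        linarith
      subst hi0
      -- now w ⟨n⟩ = (s 0 + s j)/2 ; show (j : ℕ) = n
      have hjn : (j : ℕ) = n := by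
        rcases lt_trichotomy (j : ℕ) n with hlt | heq | hgt
        · exfalso
          have hwj := ih (j : ℕ) hlt (by omega)
          have : (⟨(j : ℕ), by omega⟩ : Fin 10) = j := by ext; simp
          rw [this] at hwj
          have hlt' : w ⟨(j : ℕ), by omega⟩ < w ⟨n, by omega⟩ := by
            apply hw; rw [Fin.lt_def]; simpa using hlt
          rw [hwj, hval] at hlt'
          exact lt_irrefl _ hlt'
        · exact heq
        · exfalso
          -- t n = (s 0 + s ⟨n⟩)/2 is in range w
          have htmem : (s 0 + s ⟨n, by omega⟩) / 2 ∈ Set.range w := by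
            rw [hrange]
            exact ⟨0, ⟨n, by omega⟩, by simp [Fin.le_def], rfl⟩
          obtain ⟨m, hm⟩ := htmem
          have hsn : s ⟨n, by omega⟩ < s j := by
            apply hs; rw [Fin.lt_def]; simpa using hgt
          have hmn : w m < w ⟨n, by omega⟩ := by
            rw [hm, hval]; linarith
          have hmn' : (m : ℕ) < n := by
            have := hw.lt_iff_lt.mp hmn
            rw [Fin.lt_def] at this
            simpa using this
          have hwm := ih (m : ℕ) hmn' (by omega)
          have hme : (⟨(m : ℕ), by omega⟩ : Fin 55) = m := by ext; simp
          rw [hme, hm] at hwm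
          have : s ⟨n, by omega⟩ = s ⟨(m : ℕ), by omega⟩ := by linarith
          have := hs.injective this
          have : n = (m : ℕ) := congrArg Fin.val this
          omega
      have hje : j = ⟨n, by omega⟩ := by ext; simp [hjn]
      rw [hval, hje]
  intro k hk
  have hke : (⟨(k : ℕ), by omega⟩ : Fin 55) = k := by ext; simp
  have := key (k : ℕ) hk
  rwa [hke] at this
end

section
/- Let (Ω, F, P) be a probability space, β_1 a real number, and s : Ω → (Fin 10 → ℝ) a measurable map such that for every ω the values s_1(ω) < ... < s_10(ω) are strictly increasing and their 55 Walsh averages are pairwise distinct; let w_9(ω) and w_47(ω) denote the 9th and 47th smallest Walsh averages of s_1(ω), ..., s_10(ω). Define p_1 = P(β_1 ∈ (s_2, s_9) ∧ 2s_2 ≤ s_1 + s_9 ∧ s_2 + s_10 ≤ 2s_9), p_2 = P(β_1 ∈ (s_2, s_10) ∧ 2s_2 ≤ s_1 + s_9 ∧ 2s_9 < s_2 + s_10), p_3 = P(β_1 ∈ (s_1, s_9) ∧ s_1 + s_9 < 2s_2 ∧ s_2 + s_10 ≤ 2s_9), and p_4 = P(β_1 ∈ (s_1, s_10) ∧ s_1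 + s_9 < 2s_2 ∧ 2s_9 < s_2 + s_10). Then P(β_1 ∈ (w_9, w_47)) ≤ p_1 + p_2 + p_3 + p_4. -/
open MeasureTheory

lemma walsh_low (s : Fin 10 → ℝ) (hs : StrictMono s) (w : Fin 55 → ℝ) (hw : StrictMono w)
    (hr : Set.range w = {v : ℝ | ∃ i j : Fin 10, i ≤ j ∧ v = (s i + s j) / 2})
    (hc : 2 * s 1 ≤ s 0 + s 8) : s 1 ≤ w 8 := by
  by_contra h
  push_neg at h
  set S : Finset (Fin 55) := Finset.univ.filter (fun k => w k < s 1) with hSdef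
  have hcard : S.card ≤ 8 := by
    have := Finset.card_le_card_of_injOn (f := w)
      (s := S)
      (t := (Finset.univ.filter (fun j : Fin 10 => (j : ℕ) < 8)).image (fun j => (s 0 + s j) / 2))
      ?_ (hw.injective.injOn)
    · refine this.trans ?_
      refine Finset.card_image_le.trans ?_
      decide
    · intro k hk
      have hk' : w k < s 1 := by
        simpa [hSdef] using hk
      have hmem : w k ∈ Set.range w := ⟨k, rfl⟩
      rw [hr] at hmem
      obtain ⟨i, j, hij, hv⟩ := hmem
      have hi0 : i = 0 := by
        by_contra hi
        have h1 : (1 : ℕ) ≤ (i : ℕ) := Nat.one_le_iff_ne_zero.mpr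
          (fun h0 => hi (Fin.ext h0))
        have h1i : (1 : Fin 10) ≤ i := by
          rw [Fin.le_def]; omega
        have hsi : s 1 ≤ s i := hs.monotone h1i
        have hsj : s 1 ≤ s j := hs.monotone (le_trans h1i hij)
        rw [hv] at hk'
        linarith
      subst hi0
      have hj8 : (j : ℕ) < 8 := by
        by_contra hj
        push_neg at hj
        have h8j : (8 : Fin 10) ≤ j := by rw [Fin.le_def]; omega
        have : s 8 ≤ s j := hs.monotone h8j
        rw [hv] at hk'
        linarith
      refine Finset.mem_image.mpr ⟨j, ?_, hv.symm⟩
      simp [hj8]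
  have hsub : (Finset.univ.filter (fun k : Fin 55 => (k : ℕ) ≤ 8)) ⊆ S := by
    intro k hk
    simp only [hSdef, Finset.mem_filter, Finset.mem_univ, true_and] at hk ⊢
    have hk8 : k ≤ (8 : Fin 55) := by rw [Fin.le_def]; omega
    exact lt_of_le_of_lt (hw.monotone hk8) h
  have h9 : (Finset.univ.filter (fun k : Fin 55 => (k : ℕ) ≤ 8)).card = 9 := by decide
  have := Finset.card_le_card hsub
  omega

lemma walsh_high (s : Fin 10 → ℝ) (hs : StrictMono s) (w : Fin 55 → ℝ) (hw : StrictMono w)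
    (hr : Set.range w = {v : ℝ | ∃ i j : Fin 10, i ≤ j ∧ v = (s i + s j) / 2})
    (hc : s 1 + s 9 ≤ 2 * s 8) : w 46 ≤ s 8 := by
  by_contra h
  push_neg at h
  set S : Finset (Fin 55) := Finset.univ.filter (fun k => s 8 < w k) with hSdef
  have hcard : S.card ≤ 8 := by
    have := Finset.card_le_card_of_injOn (f := w)
      (s := S)
      (t := (Finset.univ.filter (fun i : Fin 10 => 2 ≤ (i : ℕ))).image (fun i => (s i + s 9) / 2))
      ?_ (hw.injective.injOn)
    · refine this.trans ?_
      refine Finset.card_image_le.trans ?_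
      decide
    · intro k hk
      have hk' : s 8 < w k := by
        simpa [hSdef] using hk
      have hmem : w k ∈ Set.range w := ⟨k, rfl⟩
      rw [hr] at hmem
      obtain ⟨i, j, hij, hv⟩ := hmem
      have hj9 : j = 9 := by
        by_contra hj
        have hjn : (j : ℕ) ≤ 8 := by
          have := j.isLt
          have : (j : ℕ) ≠ 9 := fun h0 => hj (Fin.ext h0)
          omega
        have hj8 : j ≤ (8 : Fin 10) := by rw [Fin.le_def]; omega
        have hsj : s j ≤ s 8 := hs.monotone hj8
        have hsi : s i ≤ s 8 := le_trans (hs.monotone hij) hsj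
        rw [hv] at hk'
        linarith
      subst hj9
      have hi2 : 2 ≤ (i : ℕ) := by
        by_contra hi
        push_neg at hi
        have hi1 : i ≤ (1 : Fin 10) := by rw [Fin.le_def]; omega
        have : s i ≤ s 1 := hs.monotone hi1
        rw [hv] at hk'
        linarith
      refine Finset.mem_image.mpr ⟨i, ?_, hv.symm⟩
      simp [hi2]
  have hsub : (Finset.univ.filter (fun k : Fin 55 => 46 ≤ (k : ℕ))) ⊆ S := by
    intro k hk
    simp only [hSdef, Finset.mem_filter, Finset.mem_univ, true_and] at hk ⊢
    have hk46 : (46 : Fin 55) ≤ k := by rw [Fin.le_def]; omega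
    exact lt_of_lt_of_le h (hw.monotone hk46)
  have h9 : (Finset.univ.filter (fun k : Fin 55 => 46 ≤ (k : ℕ))).card = 9 := by decide
  have := Finset.card_le_card hsub
  omega

lemma walsh_min (s : Fin 10 → ℝ) (hs : StrictMono s) (w : Fin 55 → ℝ)
    (hr : Set.range w = {v : ℝ | ∃ i j : Fin 10, i ≤ j ∧ v = (s i + s j) / 2})
    (k : Fin 55) : s 0 ≤ w k := by
  have hmem : w k ∈ Set.range w := ⟨k, rfl⟩
  rw [hr] at hmem
  obtain ⟨i, j, hij, hv⟩ := hmem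
  have h1 : s 0 ≤ s i := hs.monotone (Fin.zero_le i)
  have h2 : s 0 ≤ s j := hs.monotone (Fin.zero_le j)
  rw [hv]; linarith

lemma walsh_max (s : Fin 10 → ℝ) (hs : StrictMono s) (w : Fin 55 → ℝ)
    (hr : Set.range w = {v : ℝ | ∃ i j : Fin 10, i ≤ j ∧ v = (s i + s j) / 2})
    (k : Fin 55) : w k ≤ s 9 := by
  have hmem : w k ∈ Set.range w := ⟨k, rfl⟩
  rw [hr] at hmem
  obtain ⟨i, j, hij, hv⟩ := hmem
  have h1 : s i ≤ s 9 := hs.monotone (by have := i.isLt; rw [Fin.le_def]; omega)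
  have h2 : s j ≤ s 9 := hs.monotone (by have := j.isLt; rw [Fin.le_def]; omega)
  rw [hv]; linarith

/-- On a probability space, let `s : Ω → (Fin 10 → ℝ)` be measurable with
`s ω` strictly increasing for every `ω` and the 55 Walsh averages of `s ω` pairwise
distinct (encoded by the existence of a strictly monotone enumeration `w ω : Fin 55 → ℝ`
of the set of Walsh averages). With 0-based indices (`s 0 = s_1`, ..., `s 9 = s_10`,
`w 8 = w_9`, `w 46 = w_47`), the probability that `β_1 ∈ (w_9, w_47)` is at most
`p_1 + p_2 + p_3 + p_4`. -/
theorem tukey_confidence_upper_bound {Ω : Type*} [MeasurableSpace Ω]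
    (P : Measure Ω) [IsProbabilityMeasure P] (β1 : ℝ)
    (s : Ω → Fin 10 → ℝ) (hs_meas : Measurable s)
    (hs_mono : ∀ ω, StrictMono (s ω))
    (w : Ω → Fin 55 → ℝ)
    (hw_mono : ∀ ω, StrictMono (w ω))
    (hw_range : ∀ ω,
      Set.range (w ω) = {v : ℝ | ∃ i j : Fin 10, i ≤ j ∧ v = (s ω i + s ω j) / 2}) :
    P {ω | β1 ∈ Set.Ioo (w ω 8) (w ω 46)} ≤
      P {ω | β1 ∈ Set.Ioo (s ω 1) (s ω 8) ∧
             2 * s ω 1 ≤ s ω 0 + s ω 8 ∧ s ω 1 + s ω 9 ≤ 2 * s ω 8} +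
      P {ω | β1 ∈ Set.Ioo (s ω 1) (s ω 9) ∧
             2 * s ω 1 ≤ s ω 0 + s ω 8 ∧ 2 * s ω 8 < s ω 1 + s ω 9} +
      P {ω | β1 ∈ Set.Ioo (s ω 0) (s ω 8) ∧
             s ω 0 + s ω 8 < 2 * s ω 1 ∧ s ω 1 + s ω 9 ≤ 2 * s ω 8} +
      P {ω | β1 ∈ Set.Ioo (s ω 0) (s ω 9) ∧
             s ω 0 + s ω 8 < 2 * s ω 1 ∧ 2 * s ω 8 < s ω 1 + s ω 9} := by
  have key : {ω | β1 ∈ Set.Ioo (w ω 8) (w ω 46)} ⊆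
      ((({ω | β1 ∈ Set.Ioo (s ω 1) (s ω 8) ∧
             2 * s ω 1 ≤ s ω 0 + s ω 8 ∧ s ω 1 + s ω 9 ≤ 2 * s ω 8} ∪
        {ω | β1 ∈ Set.Ioo (s ω 1) (s ω 9) ∧
             2 * s ω 1 ≤ s ω 0 + s ω 8 ∧ 2 * s ω 8 < s ω 1 + s ω 9}) ∪
        {ω | β1 ∈ Set.Ioo (s ω 0) (s ω 8) ∧
             s ω 0 + s ω 8 < 2 * s ω 1 ∧ s ω 1 + s ω 9 ≤ 2 * s ω 8}) ∪
        {ω | β1 ∈ Set.Ioo (s ω 0) (s ω 9) ∧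
             s ω 0 + s ω 8 < 2 * s ω 1 ∧ 2 * s ω 8 < s ω 1 + s ω 9}) := by
    intro ω hω
    obtain ⟨h1, h2⟩ := hω
    simp only [Set.mem_union, Set.mem_setOf_eq, Set.mem_Ioo]
    rcases le_or_gt (2 * s ω 1) (s ω 0 + s ω 8) with hA | hA
    · rcases le_or_gt (s ω 1 + s ω 9) (2 * s ω 8) with hB | hB
      · exact Or.inl (Or.inl (Or.inl ⟨⟨lt_of_le_of_lt
          (walsh_low _ (hs_mono ω) _ (hw_mono ω) (hw_range ω) hA) h1,
          lt_of_lt_of_le h2 (walsh_high _ (hs_mono ω) _ (hw_mono ω) (hw_range ω) hB)⟩,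
          hA, hB⟩))
      · exact Or.inl (Or.inl (Or.inr ⟨⟨lt_of_le_of_lt
          (walsh_low _ (hs_mono ω) _ (hw_mono ω) (hw_range ω) hA) h1,
          lt_of_lt_of_le h2 (walsh_max _ (hs_mono ω) _ (hw_range ω) 46)⟩, hA, hB⟩))
    · rcases le_or_gt (s ω 1 + s ω 9) (2 * s ω 8) with hB | hB
      · exact Or.inl (Or.inr ⟨⟨lt_of_le_of_lt
          (walsh_min _ (hs_mono ω) _ (hw_range ω) 8) h1,
          lt_of_lt_of_le h2 (walsh_high _ (hs_mono ω) _ (hw_mono ω) (hw_range ω) hB)⟩,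
          hA, hB⟩)
      · exact Or.inr ⟨⟨lt_of_le_of_lt
          (walsh_min _ (hs_mono ω) _ (hw_range ω) 8) h1,
          lt_of_lt_of_le h2 (walsh_max _ (hs_mono ω) _ (hw_range ω) 46)⟩, hA, hB⟩
  refine (measure_mono key).trans ?_
  refine (measure_union_le _ _).trans ?_
  refine add_le_add_left ((measure_union_le _ _).trans ?_) _
  exact add_le_add_left (measure_union_le _ _) _
end

section
/- Let Y_1, Y_2, Y_3, Y_4, Y_5 be real numbers and consider the equidistant design x_i = i (i = 1,...,5). Define the ten sample slopes S_{ij} = (Y_i - Y_j)/(i - j) for 1 ≤ i < j ≤ 5, assume they are pairwise distinct, and let s_1 < s_2 < ... < s_10 be their increasing enumeration. Then it is impossible that both s_1 + s_9 < 2 s_2 and 2 s_9 < s_2 + s_10 hold. -/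
set_option maxHeartbeats 1000000


/-- For five data points `Y_1, ..., Y_5` (indexed by `Fin 5`) on the
equidistant design `x_i = i` (here `x i = (i : ℝ) + 1 ∈ {1,...,5}`), let
`s 0 < s 1 < ... < s 9` (i.e. `s_1 < ... < s_10`) be the increasing enumeration of the
ten pairwise distinct sample slopes `S_ij = (Y_i - Y_j)/(x_i - x_j)` for `i < j`.
Then it is impossible that both `s_1 + s_9 < 2 s_2` and `2 s_9 < s_2 + s_10` hold. -/
theorem p4_impossible (Y : Fin 5 → ℝ) (s : Fin 10 → ℝ) (hs : StrictMono s)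
    (hrange : Set.range s =
      {v : ℝ | ∃ i j : Fin 5, i < j ∧
        v = (Y i - Y j) / (((i : ℝ) + 1) - ((j : ℝ) + 1))}) :
    ¬(s 0 + s 8 < 2 * s 1 ∧ 2 * s 8 < s 1 + s 9) := by
  rintro ⟨H1, H2⟩
  set v : Fin 10 → ℝ := ![Y 1 - Y 0, Y 2 - Y 1, Y 3 - Y 2, Y 4 - Y 3,
    (Y 2 - Y 0)/2, (Y 3 - Y 1)/2, (Y 4 - Y 2)/2, (Y 3 - Y 0)/3, (Y 4 - Y 1)/3,
    (Y 4 - Y 0)/4] with hvdef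
  have ev0 : v 0 = Y 1 - Y 0 := rfl
  have ev1 : v 1 = Y 2 - Y 1 := rfl
  have ev2 : v 2 = Y 3 - Y 2 := rfl
  have ev3 : v 3 = Y 4 - Y 3 := rfl
  have ev4 : v 4 = (Y 2 - Y 0)/2 := rfl
  have ev5 : v 5 = (Y 3 - Y 1)/2 := rfl
  have ev6 : v 6 = (Y 4 - Y 2)/2 := rfl
  have ev7 : v 7 = (Y 3 - Y 0)/3 := rfl
  have ev8 : v 8 = (Y 4 - Y 1)/3 := rfl
  have ev9 : v 9 = (Y 4 - Y 0)/4 := rfl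
  -- every element of the slope set is one of the ten values
  have hbwd : ∀ w ∈ Set.range s, w = v 0 ∨ w = v 1 ∨ w = v 2 ∨ w = v 3 ∨
      w = v 4 ∨ w = v 5 ∨ w = v 6 ∨ w = v 7 ∨ w = v 8 ∨ w = v 9 := by
    intro w hw
    rw [hrange] at hw
    obtain ⟨i, j, hij, rfl⟩ := hw
    simp only [ev0, ev1, ev2, ev3, ev4, ev5, ev6, ev7, ev8, ev9]
    fin_cases i <;> fin_cases j <;> simp_all <;>
      first
      | (left; ring1)
      | (right; left; ring1)
      | (right; right; left; ring1)
      | (right; right; right; left; ring1)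
      | (right; right; right; right; left; ring1)
      | (right; right; right; right; right; left; ring1)
      | (right; right; right; right; right; right; left; ring1)
      | (right; right; right; right; right; right; right; left; ring1)
      | (right; right; right; right; right; right; right; right; left; ring1)
      | (right; right; right; right; right; right; right; right; right; ring1)
  -- each of the ten values is a slope
  have hfwd : ∀ k : Fin 10, v k ∈ Set.range s := by
    have c0 : ((0:Fin 5):ℕ) = 0 := rfl
    have c1 : ((1:Fin 5):ℕ) = 1 := rfl
    have c2 : ((2:Fin 5):ℕ) = 2 := rfl
    have c3 : ((3:Fin 5):ℕ) = 3 := rfl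
    have c4 : ((4:Fin 5):ℕ) = 4 := rfl
    intro k
    rw [hrange]
    fin_cases k
    · exact ⟨0, 1, by decide, by norm_num [hvdef, c0, c1, c2, c3, c4]; try ring1⟩
    · exact ⟨1, 2, by decide, by norm_num [hvdef, c0, c1, c2, c3, c4]; try ring1⟩
    · exact ⟨2, 3, by decide, by norm_num [hvdef, c0, c1, c2, c3, c4]; try ring1⟩
    · exact ⟨3, 4, by decide, by norm_num [hvdef, c0, c1, c2, c3, c4]; try ring1⟩
    · exact ⟨0, 2, by decide, by norm_num [hvdef, c0, c1, c2, c3, c4]; try ring1⟩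
    · exact ⟨1, 3, by decide, by norm_num [hvdef, c0, c1, c2, c3, c4]; try ring1⟩
    · exact ⟨2, 4, by decide, by norm_num [hvdef, c0, c1, c2, c3, c4]; try ring1⟩
    · exact ⟨0, 3, by decide, by norm_num [hvdef, c0, c1, c2, c3, c4]; try ring1⟩
    · exact ⟨1, 4, by decide, by norm_num [hvdef, c0, c1, c2, c3, c4]; try ring1⟩
    · exact ⟨0, 4, by decide, by norm_num [hvdef, c0, c1, c2, c3, c4]; try ring1⟩
  -- the ten values are pairwise distinct
  have hv : Set.range v = Set.range s := by
    apply Set.Subset.antisymm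
    · rintro w ⟨k, rfl⟩; exact hfwd k
    · rintro w hw
      rcases hbwd w hw with h|h|h|h|h|h|h|h|h|h
      exacts [⟨0, h.symm⟩, ⟨1, h.symm⟩, ⟨2, h.symm⟩, ⟨3, h.symm⟩, ⟨4, h.symm⟩,
        ⟨5, h.symm⟩, ⟨6, h.symm⟩, ⟨7, h.symm⟩, ⟨8, h.symm⟩, ⟨9, h.symm⟩]
  have himg : Finset.image v Finset.univ = Finset.image s Finset.univ := by
    apply Finset.coe_injective
    simp only [Finset.coe_image, Finset.coe_univ, Set.image_univ]
    exact hv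
  have hcard : (Finset.image v Finset.univ).card = (Finset.univ : Finset (Fin 10)).card := by
    rw [himg, Finset.card_image_of_injective _ hs.injective]
  have hinj : Function.Injective v := by
    have h := Finset.card_image_iff.mp hcard
    intro a b hab
    exact h (by simp) (by simp) hab
  have hNE : ∀ k l : Fin 10, k ≠ l → v k ≠ v l := fun k l h hh => h (hinj hh)
  -- order facts
  have key : ∀ k : Fin 10, s 0 ≤ v k ∧ v k ≤ s 9 ∧
      (v k ≠ s 0 → s 1 ≤ v k) ∧ (v k ≠ s 9 → v k ≤ s 8) := by
    intro k
    obtain ⟨l, hl⟩ := hfwd k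
    have hl9 : l.val ≤ 9 := Nat.lt_succ_iff.mp l.isLt
    refine ⟨?_, ?_, ?_, ?_⟩
    · rw [← hl]; exact hs.monotone (Fin.zero_le l)
    · rw [← hl]
      exact hs.monotone (by rw [Fin.le_def]; exact hl9)
    · intro hne
      have hl0 : l.val ≠ 0 := by
        intro h0
        exact hne (((Fin.ext h0 : l = 0) ▸ hl).symm)
      rw [← hl]
      exact hs.monotone (by rw [Fin.le_def]; show 1 ≤ l.val; omega)
    · intro hne
      have hl9' : l.val ≠ 9 := by
        intro h9
        exact hne (((Fin.ext h9 : l = 9) ▸ hl).symm)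
      rw [← hl]
      exact hs.monotone (by rw [Fin.le_def]; show l.val ≤ 8; omega)
  have h09 : s 0 < s 9 := hs (by decide)
  -- averaging identities
  have e4 : v 4 * 2 = v 0 + v 1 := by rw [ev4, ev0, ev1]; ring1
  have e5 : v 5 * 2 = v 1 + v 2 := by rw [ev5, ev1, ev2]; ring1
  have e6 : v 6 * 2 = v 2 + v 3 := by rw [ev6, ev2, ev3]; ring1
  have e7 : v 7 * 3 = v 0 + v 1 + v 2 := by rw [ev7, ev0, ev1, ev2]; ring1
  have e8 : v 8 * 3 = v 1 + v 2 + v 3 := by rw [ev8, ev1, ev2, ev3]; ring1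
  have e9 : v 9 * 4 = v 0 + v 1 + v 2 + v 3 := by rw [ev9, ev0, ev1, ev2, ev3]; ring1
  -- the minimum is one of the four basic slopes
  have hmin : s 0 = v 0 ∨ s 0 = v 1 ∨ s 0 = v 2 ∨ s 0 = v 3 := by
    rcases hbwd (s 0) ⟨0, rfl⟩ with h|h|h|h|h|h|h|h|h|h
    · exact Or.inl h
    · exact Or.inr (Or.inl h)
    · exact Or.inr (Or.inr (Or.inl h))
    · exact Or.inr (Or.inr (Or.inr h))
    · exact absurd (by linarith [h, e4, (key 0).1, (key 1).1] : v 0 = v 1)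
        (hNE 0 1 (by decide))
    · exact absurd (by linarith [h, e5, (key 1).1, (key 2).1] : v 1 = v 2)
        (hNE 1 2 (by decide))
    · exact absurd (by linarith [h, e6, (key 2).1, (key 3).1] : v 2 = v 3)
        (hNE 2 3 (by decide))
    · exact absurd (by linarith [h, e7, (key 0).1, (key 1).1, (key 2).1] : v 0 = v 1)
        (hNE 0 1 (by decide))
    · exact absurd (by linarith [h, e8, (key 1).1, (key 2).1, (key 3).1] : v 1 = v 2)
        (hNE 1 2 (by decide))
    · exact absurd (by linarith [h, e9, (key 0).1, (key 1).1, (key 2).1, (key 3).1] : v 0 = v 1)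
        (hNE 0 1 (by decide))
  -- the maximum is one of the four basic slopes
  have hmax : s 9 = v 0 ∨ s 9 = v 1 ∨ s 9 = v 2 ∨ s 9 = v 3 := by
    rcases hbwd (s 9) ⟨9, rfl⟩ with h|h|h|h|h|h|h|h|h|h
    · exact Or.inl h
    · exact Or.inr (Or.inl h)
    · exact Or.inr (Or.inr (Or.inl h))
    · exact Or.inr (Or.inr (Or.inr h))
    · exact absurd (by linarith [h, e4, (key 0).2.1, (key 1).2.1] : v 0 = v 1)
        (hNE 0 1 (by decide))
    · exact absurd (by linarith [h, e5, (key 1).2.1, (key 2).2.1] : v 1 = v 2)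
        (hNE 1 2 (by decide))
    · exact absurd (by linarith [h, e6, (key 2).2.1, (key 3).2.1] : v 2 = v 3)
        (hNE 2 3 (by decide))
    · exact absurd (by linarith [h, e7, (key 0).2.1, (key 1).2.1, (key 2).2.1] : v 0 = v 1)
        (hNE 0 1 (by decide))
    · exact absurd (by linarith [h, e8, (key 1).2.1, (key 2).2.1, (key 3).2.1] : v 1 = v 2)
        (hNE 1 2 (by decide))
    · exact absurd
        (by linarith [h, e9, (key 0).2.1, (key 1).2.1, (key 2).2.1, (key 3).2.1] : v 0 = v 1)
        (hNE 0 1 (by decide))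
  -- main case analysis
  rcases hmin with ha|ha|ha|ha <;> rcases hmax with hb|hb|hb|hb
  -- a = 0
  · linarith
  · -- (0,1) : b-side, y = 2, P = v 5
    have hP : v 5 ≤ s 8 := (key 5).2.2.2 (by rw [hb]; exact hNE 5 1 (by decide))
    have hy : s 1 ≤ v 2 := (key 2).2.2.1 (by rw [ha]; exact hNE 2 0 (by decide))
    linarith [e5, hb, hP, hy, H2]
  · -- (0,2) : a-side, x = 1, P = v 4
    have hP : s 1 ≤ v 4 := (key 4).2.2.1 (by rw [ha]; exact hNE 4 0 (by decide))
    have hx : v 1 ≤ s 8 := (key 1).2.2.2 (by rw [hb]; exact hNE 1 2 (by decide))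
    linarith [e4, ha, hP, hx, H1]
  · -- (0,3) : a-side, x = 1, P = v 4
    have hP : s 1 ≤ v 4 := (key 4).2.2.1 (by rw [ha]; exact hNE 4 0 (by decide))
    have hx : v 1 ≤ s 8 := (key 1).2.2.2 (by rw [hb]; exact hNE 1 3 (by decide))
    linarith [e4, ha, hP, hx, H1]
  -- a = 1
  · -- (1,0) : a-side, x = 2, P = v 5
    have hP : s 1 ≤ v 5 := (key 5).2.2.1 (by rw [ha]; exact hNE 5 1 (by decide))
    have hx : v 2 ≤ s 8 := (key 2).2.2.2 (by rw [hb]; exact hNE 2 0 (by decide))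
    linarith [e5, ha, hP, hx, H1]
  · linarith
  · -- (1,2) : a-side, x = 0, P = v 4
    have hP : s 1 ≤ v 4 := (key 4).2.2.1 (by rw [ha]; exact hNE 4 1 (by decide))
    have hx : v 0 ≤ s 8 := (key 0).2.2.2 (by rw [hb]; exact hNE 0 2 (by decide))
    linarith [e4, ha, hP, hx, H1]
  · -- (1,3) : a-side, x = 0, P = v 4
    have hP : s 1 ≤ v 4 := (key 4).2.2.1 (by rw [ha]; exact hNE 4 1 (by decide))
    have hx : v 0 ≤ s 8 := (key 0).2.2.2 (by rw [hb]; exact hNE 0 3 (by decide))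
    linarith [e4, ha, hP, hx, H1]
  -- a = 2
  · -- (2,0) : a-side, x = 1, P = v 5
    have hP : s 1 ≤ v 5 := (key 5).2.2.1 (by rw [ha]; exact hNE 5 2 (by decide))
    have hx : v 1 ≤ s 8 := (key 1).2.2.2 (by rw [hb]; exact hNE 1 0 (by decide))
    linarith [e5, ha, hP, hx, H1]
  · -- (2,1) : a-side, x = 3, P = v 6
    have hP : s 1 ≤ v 6 := (key 6).2.2.1 (by rw [ha]; exact hNE 6 2 (by decide))
    have hx : v 3 ≤ s 8 := (key 3).2.2.2 (by rw [hb]; exact hNE 3 1 (by decide))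
    linarith [e6, ha, hP, hx, H1]
  · linarith
  · -- (2,3) : a-side, x = 1, P = v 5
    have hP : s 1 ≤ v 5 := (key 5).2.2.1 (by rw [ha]; exact hNE 5 2 (by decide))
    have hx : v 1 ≤ s 8 := (key 1).2.2.2 (by rw [hb]; exact hNE 1 3 (by decide))
    linarith [e5, ha, hP, hx, H1]
  -- a = 3
  · -- (3,0) : a-side, x = 2, P = v 6
    have hP : s 1 ≤ v 6 := (key 6).2.2.1 (by rw [ha]; exact hNE 6 3 (by decide))
    have hx : v 2 ≤ s 8 := (key 2).2.2.2 (by rw [hb]; exact hNE 2 0 (by decide))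
    linarith [e6, ha, hP, hx, H1]
  · -- (3,1) : a-side, x = 2, P = v 6
    have hP : s 1 ≤ v 6 := (key 6).2.2.1 (by rw [ha]; exact hNE 6 3 (by decide))
    have hx : v 2 ≤ s 8 := (key 2).2.2.2 (by rw [hb]; exact hNE 2 1 (by decide))
    linarith [e6, ha, hP, hx, H1]
  · -- (3,2) : b-side, y = 1, P = v 5
    have hP : v 5 ≤ s 8 := (key 5).2.2.2 (by rw [hb]; exact hNE 5 2 (by decide))
    have hy : s 1 ≤ v 1 := (key 1).2.2.1 (by rw [ha]; exact hNE 1 3 (by decide))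
    linarith [e5, hb, hP, hy, H2]
  · linarith
end

section
/- Let (Ω, F, P) be a probability space, let ε : Ω → (Fin 5 → ℝ) be measurable with its law (the pushforward measure on Fin 5 → ℝ) invariant under pointwise negation v ↦ -v, and let β_0, β_1 be real numbers. With the equidistant design x_i = i, put Y_i(ω) = β_0 + β_1 · i + ε_i(ω) for i = 1, ..., 5 and define the ten sample slopes S_{ij}(ω) = (Y_i(ω) - Y_j(ω))/(i - j) for i < j; assume they are pairwise distinct for every ω, and let s_1(ω) < ... < s_10(ω) be their increasing enumeration. Then p_2 = p_3, where p_2 = P(β_1 ∈ (s_2, s_10) ∧ 2s_2 ≤ s_1 + s_9 ∧ 2s_9 < s_2 + s_10) and p_3 = P(β_1 ∈ (s_1, s_9) ∧ s_1 + s_9 < 2s_2 ∧ s_2 + s_10 ≤ 2s_9). -/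
open MeasureTheory Finset

set_option maxRecDepth 8000
set_option maxHeartbeats 2000000

/-- Measurability of a finite `inf'` of measurable real functions. -/
lemma measurable_finset_inf' {α ι : Type*} [MeasurableSpace α] {s : Finset ι} (hs : s.Nonempty)
    {f : ι → α → ℝ} (hf : ∀ i, Measurable (f i)) :
    Measurable (fun a => s.inf' hs (fun i => f i a)) := by
  induction hs using Finset.Nonempty.cons_induction with
  | singleton i => simpa using hf i
  | cons i s hi hs ih => simpa [Finset.inf'_cons hs] using (hf i).min ih

lemma measurable_finset_sup' {α ι : Type*} [MeasurableSpace α] {s : Finset ι} (hs : s.Nonempty)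
    {f : ι → α → ℝ} (hf : ∀ i, Measurable (f i)) :
    Measurable (fun a => s.sup' hs (fun i => f i a)) := by
  induction hs using Finset.Nonempty.cons_induction with
  | singleton i => simpa using hf i
  | cons i s hi hs ih => simpa [Finset.sup'_cons hs] using (hf i).max ih

/-- `k`-th order statistic (0-based) of `v : Fin n → ℝ`. -/
noncomputable def oStat {n : ℕ} (k : ℕ) (hk : k < n) (v : Fin n → ℝ) : ℝ :=
  Finset.inf' ((Finset.univ.powersetCard (k+1)).attach)
    (Finset.attach_nonempty_iff.mpr (by
      rw [Finset.powersetCard_nonempty]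
      simpa using hk))
    (fun T => Finset.sup' T.1 (Finset.card_pos.mp (by
      have h := (Finset.mem_powersetCard.mp T.2).2; omega)) v)

lemma oStat_measurable {α : Type*} [MeasurableSpace α] {n : ℕ} (k : ℕ) (hk : k < n)
    {v : α → Fin n → ℝ} (hv : ∀ i, Measurable (fun a => v a i)) :
    Measurable (fun a => oStat k hk (v a)) := by
  unfold oStat
  exact measurable_finset_inf' _ (fun T => measurable_finset_sup' _ (fun i => hv i))

lemma oStat_eq {n : ℕ} (s v : Fin n → ℝ) (hs : StrictMono s)
    (hr : Set.range s = Set.range v) (k : ℕ) (hk : k < n) :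
    oStat k hk v = s ⟨k, hk⟩ := by
  classical
  -- v is injective
  have himg : (Finset.univ.image v) = (Finset.univ.image s) := by
    apply Finset.coe_injective
    simp [Set.image_univ, hr]
  have hvinj : Function.Injective v := by
    have hcard : (Finset.univ.image v).card = n := by
      rw [himg, Finset.card_image_of_injective _ hs.injective, Finset.card_univ, Fintype.card_fin]
    have := Finset.card_image_iff.mp (by rw [hcard, Finset.card_univ, Fintype.card_fin])
    intro a b hab
    exact this (Finset.mem_univ a) (Finset.mem_univ b) hab
  -- choice functions
  have hsv : ∀ j : Fin n, ∃ i, v i = s j := by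
    intro j
    have : s j ∈ Set.range v := hr ▸ Set.mem_range_self j
    exact this
  choose c hc using hsv
  have hvs : ∀ i : Fin n, ∃ j, s j = v i := by
    intro i
    have : v i ∈ Set.range s := hr.symm ▸ Set.mem_range_self i
    exact this
  choose d hd using hvs
  have hcinj : Function.Injective c := by
    intro a b hab
    exact hs.injective (by rw [← hc a, ← hc b, hab])
  apply le_antisymm
  · -- inf' ≤ s k : exhibit T₀ = c '' Iic ⟨k,hk⟩
    set T₀ : Finset (Fin n) := (Finset.Iic (⟨k, hk⟩ : Fin n)).image c with hT₀
    have hT₀mem : T₀ ∈ Finset.univ.powersetCard (k+1) := by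
      rw [Finset.mem_powersetCard]
      refine ⟨Finset.subset_univ _, ?_⟩
      rw [Finset.card_image_of_injective _ hcinj, Fin.card_Iic]
    refine le_trans (Finset.inf'_le _ (Finset.mem_attach _ ⟨T₀, hT₀mem⟩)) ?_
    apply Finset.sup'_le
    intro i hi
    simp only [hT₀, Finset.mem_image] at hi
    obtain ⟨j, hj, rfl⟩ := hi
    rw [hc]
    exact hs.monotone (Finset.mem_Iic.mp hj)
  · -- s k ≤ inf'
    apply Finset.le_inf'
    intro T _
    -- T.1 has card k+1; d '' T has card k+1, so some index ≥ k
    have hdinj : Function.Injective d := by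
      intro a b hab
      exact hvinj (by rw [← hd a, ← hd b, hab])
    have hcardT : (T.1.image d).card = k + 1 := by
      rw [Finset.card_image_of_injective _ hdinj, (Finset.mem_powersetCard.mp T.2).2]
    have : ∃ j ∈ T.1.image d, (⟨k, hk⟩ : Fin n) ≤ j := by
      by_contra h
      push_neg at h
      have hsub : T.1.image d ⊆ Finset.Iio (⟨k, hk⟩ : Fin n) := by
        intro j hj
        exact Finset.mem_Iio.mpr (h j hj)
      have := Finset.card_le_card hsub
      rw [hcardT, Fin.card_Iio, Fin.val_mk] at this
      omega
    obtain ⟨j, hj, hkj⟩ := this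
    obtain ⟨i, hi, rfl⟩ := Finset.mem_image.mp hj
    calc s ⟨k, hk⟩ ≤ s (d i) := hs.monotone hkj
    _ = v i := hd i
    _ ≤ _ := Finset.le_sup' _ hi

/-- Enumeration of the ten pairs `i < j` in `Fin 5`. -/
def pr : Fin 10 → Fin 5 × Fin 5 :=
  ![(0,1),(0,2),(0,3),(0,4),(1,2),(1,3),(1,4),(2,3),(2,4),(3,4)]

lemma pr_lt : ∀ k, (pr k).1 < (pr k).2 := by decide

lemma pr_surj : ∀ i j : Fin 5, i < j → ∃ k, pr k = (i, j) := by decide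

/-- The slope vector in terms of the noise. -/
noncomputable def V (b : ℝ) (e : Fin 5 → ℝ) (k : Fin 10) : ℝ :=
  b + (e (pr k).1 - e (pr k).2) / (((pr k).1 : ℝ) - ((pr k).2 : ℝ))

lemma V_neg (b : ℝ) (e : Fin 5 → ℝ) (k : Fin 10) : V b (-e) k = 2 * b - V b e k := by
  simp only [V, Pi.neg_apply]
  ring



lemma slope_div (b0 b1 ei ej xi xj : ℝ) (h : xi ≠ xj) :
    ((b0 + b1 * (xi + 1) + ei) - (b0 + b1 * (xj + 1) + ej)) / ((xi + 1) - (xj + 1)) =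
      b1 + (ei - ej) / (xi - xj) := by
  have h' : xi - xj ≠ 0 := sub_ne_zero.mpr h
  have h2 : (xi + 1) - (xj + 1) = xi - xj := by ring
  rw [h2]
  field_simp
  ring

/-- On a probability space, let `ε : Ω → (Fin 5 → ℝ)` be measurable with
law invariant under pointwise negation, and let `β_0, β_1` be reals. Under the
equidistant design `x_i = i` (here `x i = (i : ℝ) + 1 ∈ {1,...,5}`), put
`Y_i = β_0 + β_1 · x_i + ε_i`, and let `s ω : Fin 10 → ℝ` be the increasing enumeration
(0-based: `s 0 = s_1`, ..., `s 9 = s_10`) of the ten pairwise distinct sample slopes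
`S_ij = (Y_i - Y_j)/(x_i - x_j)`, `i < j`. Then `p_2 = p_3`. -/
theorem p2_eq_p3 {Ω : Type*} [MeasurableSpace Ω]
    (P : Measure Ω) [IsProbabilityMeasure P]
    (ε : Ω → Fin 5 → ℝ) (hε : Measurable ε)
    (hsym : P.map (fun ω => -(ε ω)) = P.map ε)
    (β0 β1 : ℝ)
    (Y : Ω → Fin 5 → ℝ)
    (hY : ∀ ω i, Y ω i = β0 + β1 * ((i : ℝ) + 1) + ε ω i)
    (s : Ω → Fin 10 → ℝ)
    (hs_mono : ∀ ω, StrictMono (s ω))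
    (hs_range : ∀ ω, Set.range (s ω) =
      {v : ℝ | ∃ i j : Fin 5, i < j ∧
        v = (Y ω i - Y ω j) / (((i : ℝ) + 1) - ((j : ℝ) + 1))}) :
    P {ω | β1 ∈ Set.Ioo (s ω 1) (s ω 9) ∧
           2 * s ω 1 ≤ s ω 0 + s ω 8 ∧ 2 * s ω 8 < s ω 1 + s ω 9} =
      P {ω | β1 ∈ Set.Ioo (s ω 0) (s ω 8) ∧
             s ω 0 + s ω 8 < 2 * s ω 1 ∧ s ω 1 + s ω 9 ≤ 2 * s ω 8} := by
  classical
  have hcast : ∀ {i j : Fin 5}, i < j → ((i : ℝ) ≠ (j : ℝ)) := by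
    intro i j hij
    have : (i : ℕ) < (j : ℕ) := hij
    exact ne_of_lt (by exact_mod_cast this)
  -- the range identity
  have hrange : ∀ ω, Set.range (s ω) = Set.range (V β1 (ε ω)) := by
    intro ω
    rw [hs_range ω]
    ext v
    simp only [Set.mem_setOf_eq, Set.mem_range]
    constructor
    · rintro ⟨i, j, hij, rfl⟩
      obtain ⟨k, hk⟩ := pr_surj i j hij
      refine ⟨k, ?_⟩
      simp only [V, hk]
      rw [hY, hY, slope_div _ _ _ _ _ _ (hcast hij)]
    · rintro ⟨k, rfl⟩
      refine ⟨(pr k).1, (pr k).2, pr_lt k, ?_⟩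
      simp only [V]
      rw [hY, hY, slope_div _ _ _ _ _ _ (hcast (pr_lt k))]
  have hok : ∀ ω (k : ℕ) (hk : k < 10), oStat k hk (V β1 (ε ω)) = s ω ⟨k, hk⟩ :=
    fun ω k hk => oStat_eq (s ω) _ (hs_mono ω) (hrange ω) k hk
  have hneg : ∀ ω (k : ℕ) (hk : k < 10),
      oStat k hk (V β1 (-(ε ω))) = 2 * β1 - s ω (Fin.rev ⟨k, hk⟩) := by
    intro ω k hk
    have ht : StrictMono (fun m : Fin 10 => 2 * β1 - s ω (Fin.rev m)) := by
      intro a b hab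
      have h1 : Fin.rev b < Fin.rev a := Fin.rev_lt_rev.mpr hab
      have := hs_mono ω h1
      simp only []
      linarith
    have hrt : Set.range (fun m : Fin 10 => 2 * β1 - s ω (Fin.rev m)) =
        Set.range (V β1 (-(ε ω))) := by
      ext x
      simp only [Set.mem_range]
      constructor
      · rintro ⟨m, rfl⟩
        have : s ω (Fin.rev m) ∈ Set.range (V β1 (ε ω)) := by
          rw [← hrange ω]; exact Set.mem_range_self _
        obtain ⟨m', hm'⟩ := this
        exact ⟨m', by rw [V_neg, hm']⟩
      · rintro ⟨m, rfl⟩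
        have : V β1 (ε ω) m ∈ Set.range (s ω) := by
          rw [hrange ω]; exact Set.mem_range_self _
        obtain ⟨j, hj⟩ := this
        refine ⟨Fin.rev j, ?_⟩
        rw [Fin.rev_rev, hj, V_neg]
    exact oStat_eq _ _ ht hrt k hk
  have h10 : ∀ k ∈ ({0, 1, 8, 9} : Set ℕ), k < 10 := by intro k hk; simp at hk; omega
  set G : Set (Fin 5 → ℝ) := {e |
      oStat 1 (by norm_num) (V β1 e) < β1 ∧ β1 < oStat 9 (by norm_num) (V β1 e) ∧
      2 * oStat 1 (by norm_num) (V β1 e) ≤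
        oStat 0 (by norm_num) (V β1 e) + oStat 8 (by norm_num) (V β1 e) ∧
      2 * oStat 8 (by norm_num) (V β1 e) <
        oStat 1 (by norm_num) (V β1 e) + oStat 9 (by norm_num) (V β1 e)} with hGdef
  have hm : ∀ (k : ℕ) (hk : k < 10), Measurable (fun e : Fin 5 → ℝ => oStat k hk (V β1 e)) := by
    intro k hk
    apply oStat_measurable
    intro i
    simp only [V]
    exact measurable_const.add
      (((measurable_pi_apply (pr i).1).sub (measurable_pi_apply (pr i).2)).div_const _)
  have hG : MeasurableSet G := by
    exact (measurableSet_lt (hm 1 (by norm_num)) measurable_const).inter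
      ((measurableSet_lt measurable_const (hm 9 (by norm_num))).inter
        ((measurableSet_le ((hm 1 (by norm_num)).const_mul 2)
            ((hm 0 (by norm_num)).add (hm 8 (by norm_num)))).inter
          (measurableSet_lt ((hm 8 (by norm_num)).const_mul 2)
            ((hm 1 (by norm_num)).add (hm 9 (by norm_num))))))
  have hA : {ω | β1 ∈ Set.Ioo (s ω 1) (s ω 9) ∧
      2 * s ω 1 ≤ s ω 0 + s ω 8 ∧ 2 * s ω 8 < s ω 1 + s ω 9} = ε ⁻¹' G := by
    ext ω
    have e0 : oStat 0 (by norm_num) (V β1 (ε ω)) = s ω 0 := hok ω 0 (by norm_num)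
    have e1 : oStat 1 (by norm_num) (V β1 (ε ω)) = s ω 1 := hok ω 1 (by norm_num)
    have e8 : oStat 8 (by norm_num) (V β1 (ε ω)) = s ω 8 := hok ω 8 (by norm_num)
    have e9 : oStat 9 (by norm_num) (V β1 (ε ω)) = s ω 9 := hok ω 9 (by norm_num)
    simp only [hGdef, Set.mem_setOf_eq, Set.mem_preimage, Set.mem_Ioo, e0, e1, e8, e9]
    tauto
  have hB : {ω | β1 ∈ Set.Ioo (s ω 0) (s ω 8) ∧
      s ω 0 + s ω 8 < 2 * s ω 1 ∧ s ω 1 + s ω 9 ≤ 2 * s ω 8} =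
      (fun ω => -(ε ω)) ⁻¹' G := by
    ext ω
    have r0 : Fin.rev (⟨0, by norm_num⟩ : Fin 10) = 9 := by decide
    have r1 : Fin.rev (⟨1, by norm_num⟩ : Fin 10) = 8 := by decide
    have r8 : Fin.rev (⟨8, by norm_num⟩ : Fin 10) = 1 := by decide
    have r9 : Fin.rev (⟨9, by norm_num⟩ : Fin 10) = 0 := by decide
    have e0 : oStat 0 (by norm_num) (V β1 (-(ε ω))) = 2 * β1 - s ω 9 := by
      rw [hneg ω 0 (by norm_num), r0]
    have e1 : oStat 1 (by norm_num) (V β1 (-(ε ω))) = 2 * β1 - s ω 8 := by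
      rw [hneg ω 1 (by norm_num), r1]
    have e8 : oStat 8 (by norm_num) (V β1 (-(ε ω))) = 2 * β1 - s ω 1 := by
      rw [hneg ω 8 (by norm_num), r8]
    have e9 : oStat 9 (by norm_num) (V β1 (-(ε ω))) = 2 * β1 - s ω 0 := by
      rw [hneg ω 9 (by norm_num), r9]
    simp only [hGdef, Set.mem_setOf_eq, Set.mem_preimage, Set.mem_Ioo, e0, e1, e8, e9]
    constructor
    · rintro ⟨⟨h1, h2⟩, h3, h4⟩
      refine ⟨by linarith, by linarith, by linarith, by linarith⟩
    · rintro ⟨h1, h2, h3, h4⟩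
      refine ⟨⟨by linarith, by linarith⟩, by linarith, by linarith⟩
  rw [hA, hB, ← Measure.map_apply hε hG, ← Measure.map_apply (f := fun ω => -(ε ω)) hε.neg hG, hsym]
end
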